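/- arXiv:1601.01521 — 2 statements merged into one kernel-verified Lean document; each statement's English description precedes it below -/
import Mathlib

section
/- Suppose the entire function φ satisfies |φ(z)| ≤ C₁(1+|z|)e^{−π√|z|} on the real axis outside the union of the disks {|z − k²| < 3d₀} ∪ {|z + k²| < 3d₀} (k ∈ ℕ), and |φ(z)| ≤ C₂(1+|z|) e^{−π√|z|(|sin(θ/2)| + |cos(θ/2)|)} on the boundary circles of these disks (z = |z|e^{iθ}), where d₀ ∈ (0, 1/12). Then there is a constant C depending only on C₁, C₂, d₀ such that |φ(x)| ≤ C (1+|x|) e^{−π√|x|} for all real x. -/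
/-!
Since `|sin(θ/2)| + |cos(θ/2)| ≥ 1`, the bound on the circles implies `C₂ (1 + |z|) e^{-π√|z|}`
there. The weight `(1 + t) e^{-π√t}` changes by at most the factor `(1 + δ) e^{π√δ}` when `t`
moves by `δ` (subadditivity of `√`), so the maximum modulus principle on a disk of radius `r`
carries the circle bound to every interior point, with constant `C₂ (1 + 2r) e^{π√(2r)}`.
-/

open Complex Real Metric

noncomputable def decayWeight (t : ℝ) : ℝ := (1 + t) * Real.exp (-π * √t)

theorem sqrt_add_le_add_sqrt {a b : ℝ} (ha : 0 ≤ a) (hb : 0 ≤ b) : √(a + b) ≤ √a + √b :=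
  sqrt_le_iff.mpr ⟨by positivity,
    by nlinarith [sq_sqrt ha, sq_sqrt hb, sqrt_nonneg a, sqrt_nonneg b]⟩

theorem one_le_abs_sin_add_abs_cos (θ : ℝ) : 1 ≤ |Real.sin θ| + |Real.cos θ| := by
  nlinarith [Real.sin_sq_add_cos_sq θ, abs_sin_le_one θ, abs_cos_le_one θ, sq_abs (Real.sin θ),
    sq_abs (Real.cos θ), abs_nonneg (Real.sin θ), abs_nonneg (Real.cos θ)]

theorem exp_mul_abs_sin_add_abs_cos_le {a : ℝ} (ha : a ≤ 0) (θ : ℝ) :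
    Real.exp (a * (|Real.sin θ| + |Real.cos θ|)) ≤ Real.exp a :=
  exp_le_exp.mpr (by nlinarith [one_le_abs_sin_add_abs_cos θ])

theorem decayWeight_le_of_le_add {s t δ : ℝ} (hs : 0 ≤ s) (ht : 0 ≤ t) (hδ : 0 ≤ δ)
    (hts : t ≤ s + δ) (hst : s ≤ t + δ) :
    decayWeight t ≤ (1 + δ) * Real.exp (π * √δ) * decayWeight s := by
  have hsqrt : √s ≤ √t + √δ := (sqrt_le_sqrt hst).trans (sqrt_add_le_add_sqrt ht hδ)
  have hexp : Real.exp (-π * √t) ≤ Real.exp (π * √δ) * Real.exp (-π * √s) := by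
    rw [← Real.exp_add]
    exact exp_le_exp.mpr (by nlinarith [pi_pos])
  calc decayWeight t ≤ ((1 + δ) * (1 + s)) * (Real.exp (π * √δ) * Real.exp (-π * √s)) := by
        unfold decayWeight
        gcongr
        nlinarith
    _ = (1 + δ) * Real.exp (π * √δ) * decayWeight s := by unfold decayWeight; ring

theorem decayWeight_norm_le_of_norm_sub_le {E : Type*} [SeminormedAddCommGroup E] {z w : E}
    {δ : ℝ} (h : ‖z - w‖ ≤ δ) :
    decayWeight ‖z‖ ≤ (1 + δ) * Real.exp (π * √δ) * decayWeight ‖w‖ :=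
  decayWeight_le_of_le_add (norm_nonneg w) (norm_nonneg z) ((norm_nonneg _).trans h)
    ((norm_le_norm_add_norm_sub' z w).trans (by linarith))
    ((norm_le_norm_add_norm_sub' w z).trans (by rw [norm_sub_rev] at h; linarith))

theorem norm_le_mul_decayWeight_of_mem_ball {f : ℂ → ℂ} (hf : Differentiable ℂ f)
    {c x : ℂ} {r C : ℝ} (hC : 0 ≤ C)
    (hsphere : ∀ z ∈ sphere c r, ‖f z‖ ≤ C * decayWeight ‖z‖) (hx : x ∈ ball c r) :
    ‖f x‖ ≤ C * ((1 + 2 * r) * Real.exp (π * √(2 * r))) * decayWeight ‖x‖ := by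
  have hr : r ≠ 0 := (pos_of_mem_ball hx).ne'
  refine norm_le_of_forall_mem_frontier_norm_le isBounded_ball hf.diffContOnCl
    (fun z hz => ?_) (subset_closure hx)
  rw [frontier_ball c hr] at hz
  have hzx : ‖z - x‖ ≤ 2 * r := by
    rw [← dist_eq_norm]
    linarith [dist_triangle_right z x c, mem_sphere.mp hz, mem_ball.mp hx]
  calc ‖f z‖ ≤ C * decayWeight ‖z‖ := hsphere z hz
    _ ≤ C * ((1 + 2 * r) * Real.exp (π * √(2 * r)) * decayWeight ‖x‖) :=
      mul_le_mul_of_nonneg_left (decayWeight_norm_le_of_norm_sub_le hzx) hC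
    _ = _ := by ring

/-- If an entire `φ` satisfies `|φ| ≤ C₁(1+|z|)e^{−π√|z|}` on the real axis outside the disks
of radius `3d₀` around `±k²` (`k ∈ ℕ, k ≥ 1`), and
`|φ(z)| ≤ C₂(1+|z|)e^{−π√|z|(|sin(θ/2)|+|cos(θ/2)|)}` on the boundary circles of these disks,
then `|φ(x)| ≤ C(1+|x|)e^{−π√|x|}` on the whole real axis. -/
theorem max_modulus_patch (d₀ C₁ C₂ : ℝ) (hd₀ : d₀ ∈ Set.Ioo (0 : ℝ) (1/12))
    (hC₁ : 0 < C₁) (hC₂ : 0 < C₂) (φ : ℂ → ℂ) (hφ : Differentiable ℂ φ)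
    (hreal : ∀ x : ℝ,
      (∀ k : ℕ, 1 ≤ k → 3 * d₀ ≤ ‖(x : ℂ) - (k : ℂ) ^ 2‖ ∧
        3 * d₀ ≤ ‖(x : ℂ) + (k : ℂ) ^ 2‖) →
      ‖φ (x : ℂ)‖ ≤ C₁ * (1 + |x|) * Real.exp (-Real.pi * Real.sqrt |x|))
    (hcircle : ∀ z : ℂ,
      (∃ k : ℕ, 1 ≤ k ∧ (‖z - (k : ℂ) ^ 2‖ = 3 * d₀ ∨
        ‖z + (k : ℂ) ^ 2‖ = 3 * d₀)) →
      ‖φ z‖ ≤ C₂ * (1 + ‖z‖) *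
        Real.exp (-Real.pi * Real.sqrt ‖z‖ *
          (|Real.sin (z.arg / 2)| + |Real.cos (z.arg / 2)|))) :
    ∃ C : ℝ, 0 < C ∧ ∀ x : ℝ,
      ‖φ (x : ℂ)‖ ≤ C * (1 + |x|) * Real.exp (-Real.pi * Real.sqrt |x|) := by
  set K := (1 + 2 * (3 * d₀)) * Real.exp (π * √(2 * (3 * d₀)))
  have hK : 0 < K := by have := hd₀.1; positivity
  have hcircle_weight : ∀ z : ℂ, (∃ k : ℕ, 1 ≤ k ∧ (‖z - (k : ℂ) ^ 2‖ = 3 * d₀ ∨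
      ‖z + (k : ℂ) ^ 2‖ = 3 * d₀)) → ‖φ z‖ ≤ C₂ * decayWeight ‖z‖ := fun z hz =>
    (hcircle z hz).trans <| by
      rw [decayWeight, ← mul_assoc]
      exact mul_le_mul_of_nonneg_left
        (exp_mul_abs_sin_add_abs_cos_le
          (mul_nonpos_of_nonpos_of_nonneg (neg_nonpos.mpr pi_pos.le) (sqrt_nonneg _)) _)
        (by positivity)
  refine ⟨C₁ + C₂ * K, by positivity, fun x => ?_⟩
  have hweight : decayWeight ‖(x : ℂ)‖ = (1 + |x|) * Real.exp (-π * √|x|) := by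
    rw [norm_real, norm_eq_abs, decayWeight]
  have hw : 0 ≤ decayWeight ‖(x : ℂ)‖ := by rw [hweight]; positivity
  rw [mul_assoc, ← hweight]
  by_cases hout : ∀ k : ℕ, 1 ≤ k → 3 * d₀ ≤ ‖(x : ℂ) - (k : ℂ) ^ 2‖ ∧
      3 * d₀ ≤ ‖(x : ℂ) + (k : ℂ) ^ 2‖
  · calc ‖φ x‖ ≤ C₁ * decayWeight ‖(x : ℂ)‖ := by rw [hweight, ← mul_assoc]; exact hreal x hout
      _ ≤ _ := by gcongr; exact le_add_of_nonneg_right (by positivity)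
  push Not at hout
  obtain ⟨k, hk, hin⟩ := hout
  have hdisk : ‖φ x‖ ≤ C₂ * K * decayWeight ‖(x : ℂ)‖ := by
    by_cases hminus : 3 * d₀ ≤ ‖(x : ℂ) - (k : ℂ) ^ 2‖
    · refine norm_le_mul_decayWeight_of_mem_ball hφ hC₂.le (c := -(k : ℂ) ^ 2)
        (fun z hz => hcircle_weight z ⟨k, hk, Or.inr ?_⟩) ?_
      · simpa using mem_sphere_iff_norm.mp hz
      · exact mem_ball_iff_norm.mpr (by simpa using hin hminus)
    · exact norm_le_mul_decayWeight_of_mem_ball hφ hC₂.le (c := (k : ℂ) ^ 2)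
        (fun z hz => hcircle_weight z ⟨k, hk, Or.inl (mem_sphere_iff_norm.mp hz)⟩)
        (mem_ball_iff_norm.mpr (not_le.mp hminus))
  exact hdisk.trans (by gcongr; exact le_add_of_nonneg_left hC₁.le)
end

section
/- Let d₀ ∈ (0, 1/2) be such that |sin(πξ)/(πξ) − 1| ≤ 1/2 whenever π|ξ| ≤ d₀, and let s₁ be the entire function with s₁(w²) = sin(πw)/(πw). Then there is a constant c_{d₀} > 0 such that |s₁(z)| ≥ c_{d₀} e^{π√|z| |sin(θ/2)|}/(1 + |z|) for all z = |z|e^{iθ} ∈ ℂ lying outside the union of the disks {|z − k²| < 3d₀}, k ∈ ℕ. -/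
open Complex Real

/-!
Write `z = w²` with `w = z^(1/2)`, so that `Re w ≥ 0`, `|Im w| = √|z| |sin(θ/2)|` and
`s₁(z) = sin(πw)/(πw)`. Let `k ∈ ℕ` be nearest to `Re w`. Since `|sin ζ|² = sin² (Re ζ) + sinh² (Im ζ)`,
Jordan's inequality near the real axis and `sinh t ≥ eᵗ/4` away from it give
`|sin πw| = |sin π(w - k)| ≥ min(1, |w - k|) e^{π|Im w|}/4`.
For `k ≥ 1`, `|w - k| |w + k| = |z - k²| ≥ 3d₀` and `|w + k| ≤ 3|w|` give `|w - k| ≥ d₀/|w|`, hence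
`c = d₀/(4π)` works. At `z = 0`, `s₁(0) = 1` by differentiating `s₁(w²) πw = sin πw` at `w = 0`.
-/

theorem Real.exp_div_four_le_sinh {t : ℝ} (ht : 1 ≤ t) : exp t / 4 ≤ sinh t := by
  have h2 : 2 ≤ exp t := by linarith [add_one_le_exp t]
  have hinv : exp (-t) * exp t = 1 := by rw [← exp_add, neg_add_cancel, exp_zero]
  rw [sinh_eq]
  nlinarith [exp_pos (-t)]

namespace Complex

theorem norm_sin_sq (z : ℂ) : ‖sin z‖ ^ 2 = Real.sin z.re ^ 2 + Real.sinh z.im ^ 2 := by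
  rw [Complex.sq_norm, normSq_apply, sin_eq]
  simp only [add_re, add_im, mul_re, mul_im, I_re, I_im, ← ofReal_sin, ← ofReal_cos,
    ← ofReal_cosh, ← ofReal_sinh, ofReal_re, ofReal_im]
  linear_combination Real.sin z.re ^ 2 * Real.cosh_sq z.im +
    Real.sinh z.im ^ 2 * Real.sin_sq_add_cos_sq z.re

theorem abs_sinh_im_le_norm_sin (z : ℂ) : |Real.sinh z.im| ≤ ‖sin z‖ :=
  abs_le_of_sq_le_sq (by rw [norm_sin_sq]; nlinarith [sq_nonneg (Real.sin z.re)]) (norm_nonneg _)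

theorem two_mul_norm_le_norm_sin_pi_mul {u : ℂ} (hu : |u.re| ≤ 1 / 2) :
    2 * ‖u‖ ≤ ‖sin (π * u)‖ := by
  have hre : 2 * |u.re| ≤ |Real.sin (π * u.re)| := by
    have h := Real.mul_abs_le_abs_sin (x := π * u.re)
      (by rw [abs_mul, abs_of_pos pi_pos]; nlinarith [pi_pos])
    rwa [abs_mul, abs_of_pos pi_pos, ← mul_assoc, div_mul_cancel₀ _ pi_ne_zero] at h
  have him : 2 * |u.im| ≤ |Real.sinh (π * u.im)| := by
    rw [Real.abs_sinh, abs_mul, abs_of_pos pi_pos]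
    exact (mul_le_mul_of_nonneg_right (by linarith [pi_gt_three]) (abs_nonneg _)).trans
      (Real.self_le_sinh_iff.mpr (by positivity))
  refine (sq_le_sq₀ (by positivity) (norm_nonneg _)).mp ?_
  rw [norm_sin_sq, mul_pow, Complex.sq_norm, normSq_apply]
  simp only [re_ofReal_mul, im_ofReal_mul]
  nlinarith [sq_abs u.re, sq_abs u.im, sq_abs (Real.sin (π * u.re)),
    sq_abs (Real.sinh (π * u.im)), abs_nonneg u.re, abs_nonneg u.im]

theorem min_one_mul_exp_div_four_le_norm_sin_pi_mul {u : ℂ} (hu : |u.re| ≤ 1 / 2) :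
    min 1 ‖u‖ * Real.exp (π * |u.im|) / 4 ≤ ‖sin (π * u)‖ := by
  by_cases h : 1 ≤ π * |u.im|
  · calc min 1 ‖u‖ * Real.exp (π * |u.im|) / 4
        ≤ Real.exp (π * |u.im|) / 4 := by
          gcongr; exact mul_le_of_le_one_left (Real.exp_pos _).le (min_le_left _ _)
      _ ≤ Real.sinh (π * |u.im|) := Real.exp_div_four_le_sinh h
      _ = |Real.sinh (π * u).im| := by
        rw [im_ofReal_mul, Real.abs_sinh, abs_mul, abs_of_pos pi_pos]
      _ ≤ ‖sin (π * u)‖ := abs_sinh_im_le_norm_sin _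
  · have hexp : Real.exp (π * |u.im|) ≤ 3 :=
      (Real.exp_le_exp.mpr (not_le.mp h).le).trans Real.exp_one_lt_d9.le |>.trans (by norm_num)
    calc min 1 ‖u‖ * Real.exp (π * |u.im|) / 4
        ≤ ‖u‖ * 3 / 4 := by gcongr; exact min_le_right _ _
      _ ≤ 2 * ‖u‖ := by linarith [norm_nonneg u]
      _ ≤ ‖sin (π * u)‖ := two_mul_norm_le_norm_sin_pi_mul hu

theorem norm_sin_pi_mul_sub_intCast (w : ℂ) (k : ℤ) :
    ‖sin (π * (w - k))‖ = ‖sin (π * w)‖ := by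
  rw [mul_sub, mul_comm (π : ℂ) k, sin_antiperiodic.sub_int_mul_eq, norm_mul]
  simp

theorem abs_cpow_inv_two_im_eq_sqrt_mul_abs_sin (z : ℂ) :
    |(z ^ (2⁻¹ : ℂ)).im| = √‖z‖ * |Real.sin (arg z / 2)| := by
  rw [← ofReal_ofNat, ← ofReal_inv, cpow_ofReal_im, abs_mul, Real.sqrt_eq_rpow,
    abs_of_nonneg (by positivity)]
  ring_nf

end Complex

theorem exists_natCast_abs_sub_le_half {x : ℝ} (hx : 0 ≤ x) : ∃ k : ℕ, |x - k| ≤ 1 / 2 := by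
  refine ⟨⌊x + 1 / 2⌋₊, abs_le.mpr ⟨?_, ?_⟩⟩
  · linarith [Nat.floor_le (by linarith : 0 ≤ x + 1 / 2)]
  · linarith [Nat.lt_floor_add_one (x + 1 / 2)]

theorem norm_add_natCast_le_three_mul {w : ℂ} {k : ℕ} (hk : |w.re - k| ≤ 1 / 2) (hk1 : 1 ≤ k) :
    ‖w + k‖ ≤ 3 * ‖w‖ := by
  have hk1' : (1 : ℝ) ≤ k := by exact_mod_cast hk1
  have hre := Complex.re_le_norm w
  calc ‖w + k‖ ≤ ‖w‖ + k := by simpa using norm_add_le w k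
    _ ≤ 3 * ‖w‖ := by linarith [(abs_le.mp hk).1, (abs_le.mp hk).2]

theorem mul_norm_div_le_norm_sub_natCast {d : ℝ} (hd1 : d ≤ 1) {w : ℂ} {k : ℕ}
    (hk : |w.re - k| ≤ 1 / 2) (hdisk : 1 ≤ k → 3 * d ≤ ‖w ^ 2 - (k : ℂ) ^ 2‖) :
    d * ‖w‖ / (1 + ‖w‖ ^ 2) ≤ ‖w - k‖ := by
  rw [div_le_iff₀ (by positivity)]
  rcases Nat.eq_zero_or_pos k with rfl | hk1
  · simp only [Nat.cast_zero, sub_zero]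
    nlinarith [norm_nonneg w, sq_nonneg ‖w‖]
  · have hdk : d ≤ ‖w - k‖ * ‖w‖ := by
      have h3 := (hdisk hk1).trans_eq (by rw [sq_sub_sq, norm_mul])
      nlinarith [norm_add_natCast_le_three_mul hk hk1, norm_nonneg (w - k)]
    nlinarith [norm_nonneg (w - k), norm_nonneg w]

theorem apply_zero_eq_one_of_apply_sq_eq_sin_div {f : ℂ → ℂ} (hf : DifferentiableAt ℂ f 0)
    (hval : ∀ w : ℂ, w ≠ 0 → f (w ^ 2) = Complex.sin (π * w) / (π * w)) : f 0 = 1 := by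
  have hπ : (π : ℂ) ≠ 0 := ofReal_ne_zero.mpr pi_ne_zero
  have hprod : (fun w : ℂ => f (w ^ 2) * (π * w)) = fun w => Complex.sin (π * w) := by
    ext w
    rcases eq_or_ne w 0 with rfl | hw
    · simp
    · rw [hval w hw, div_mul_cancel₀ _ (mul_ne_zero hπ hw)]
  have hl : HasDerivAt (fun w : ℂ => f (w ^ 2) * (π * w)) (f 0 * π) 0 := by
    have h1 := hf.hasDerivAt.comp_of_eq (0 : ℂ) (hasDerivAt_pow 2 0) (by simp)
    simpa using h1.fun_mul ((hasDerivAt_id (0 : ℂ)).const_mul (π : ℂ))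
  have hr : HasDerivAt (fun w : ℂ => Complex.sin (π * w)) π 0 := by
    simpa using ((hasDerivAt_id (0 : ℂ)).const_mul (π : ℂ)).csin
  rw [hprod] at hl
  exact mul_right_cancel₀ hπ ((hl.unique hr).trans (one_mul _).symm)

theorem mul_exp_div_le_norm_sin_pi_mul_div {d : ℝ} (hd1 : d ≤ 1) {w : ℂ} (hw : w ≠ 0)
    (hre : 0 ≤ w.re) (hdisk : ∀ k : ℕ, 1 ≤ k → 3 * d ≤ ‖w ^ 2 - (k : ℂ) ^ 2‖) :
    d * Real.exp (π * |w.im|) / (4 * π * (1 + ‖w‖ ^ 2)) ≤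
      ‖Complex.sin (π * w) / (π * w)‖ := by
  obtain ⟨k, hk⟩ := exists_natCast_abs_sub_le_half hre
  have hw₀ : 0 < ‖w‖ := norm_pos_iff.mpr hw
  have hmin : d * ‖w‖ / (1 + ‖w‖ ^ 2) ≤ min 1 ‖w - k‖ := by
    refine le_min ?_ (mul_norm_div_le_norm_sub_natCast hd1 hk (hdisk k))
    rw [div_le_one (by positivity)]
    nlinarith [sq_nonneg (‖w‖ - 1)]
  have hsin : min 1 ‖w - k‖ * Real.exp (π * |w.im|) / 4 ≤ ‖Complex.sin (π * w)‖ := by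
    have h := Complex.min_one_mul_exp_div_four_le_norm_sin_pi_mul (u := w - k) (by simpa using hk)
    rwa [sub_im, natCast_im, sub_zero, ← Int.cast_natCast,
      Complex.norm_sin_pi_mul_sub_intCast] at h
  rw [norm_div, norm_mul, norm_real, Real.norm_of_nonneg pi_pos.le]
  calc d * Real.exp (π * |w.im|) / (4 * π * (1 + ‖w‖ ^ 2))
      = d * ‖w‖ / (1 + ‖w‖ ^ 2) * Real.exp (π * |w.im|) / 4 / (π * ‖w‖) := by
        field_simp
    _ ≤ min 1 ‖w - k‖ * Real.exp (π * |w.im|) / 4 / (π * ‖w‖) := by gcongr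
    _ ≤ ‖Complex.sin (π * w)‖ / (π * ‖w‖) := by gcongr

theorem sOne_lower_bound_general (d₀ : ℝ) (hd₀ : d₀ ∈ Set.Ioo (0 : ℝ) (1/2))
    (s₁ : ℂ → ℂ) (hs₁ : Differentiable ℂ s₁)
    (hval : ∀ w : ℂ, w ≠ 0 → s₁ (w ^ 2) = Complex.sin (Real.pi * w) / (Real.pi * w)) :
    ∃ c : ℝ, 0 < c ∧ ∀ z : ℂ,
      (∀ k : ℕ, 1 ≤ k → 3 * d₀ ≤ ‖z - (k : ℂ) ^ 2‖) →
      c * Real.exp (Real.pi * Real.sqrt ‖z‖ * |Real.sin (z.arg / 2)|) /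
          (1 + ‖z‖) ≤ ‖s₁ z‖ := by
  obtain ⟨hd₀pos, hd₀half⟩ := hd₀
  refine ⟨d₀ / (4 * π), by positivity, fun z hz => ?_⟩
  rcases eq_or_ne z 0 with rfl | hz0
  · rw [apply_zero_eq_one_of_apply_sq_eq_sin_div (hs₁ 0) hval]
    simp only [norm_zero, Real.sqrt_zero, mul_zero, zero_mul, Real.exp_zero, mul_one, add_zero,
      div_one, norm_one]
    rw [div_le_one (by positivity)]
    nlinarith [pi_gt_three]
  set w := z ^ (2⁻¹ : ℂ)
  have hwz : w ^ 2 = z := cpow_ofNat_inv_pow z 2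
  have hw0 : w ≠ 0 := by rintro hw; simp [hw, eq_comm, hz0] at hwz
  have hre : 0 ≤ w.re := cpow_inv_two_re z ▸ Real.sqrt_nonneg _
  have hexp : π * √‖z‖ * |Real.sin (z.arg / 2)| = π * |w.im| := by
    rw [Complex.abs_cpow_inv_two_im_eq_sqrt_mul_abs_sin, mul_assoc]
  have hnorm : ‖z‖ = ‖w‖ ^ 2 := by rw [← hwz, norm_pow]
  rw [hexp, hnorm, ← hwz, hval w hw0, div_mul_eq_mul_div, div_div]
  exact mul_exp_div_le_norm_sin_pi_mul_div (by linarith) hw0 hre (by rwa [hwz])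

/-- Lower bound for the entire function `s₁` (with `s₁(w²) = sin(πw)/(πw)`) outside the disks
`{|z − k²| < 3d₀}`, `k ∈ ℕ, k ≥ 1`:  `|s₁(z)| ≥ c e^{π√|z| |sin(θ/2)|}/(1+|z|)`. -/
theorem sOne_lower_bound (d₀ : ℝ) (hd₀ : d₀ ∈ Set.Ioo (0 : ℝ) (1/2))
    (hsmall : ∀ ξ : ℂ, Real.pi * ‖ξ‖ ≤ d₀ →
      ‖(if ξ = 0 then 1 else Complex.sin (Real.pi * ξ) / (Real.pi * ξ)) - 1‖ ≤ 1/2)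
    (s₁ : ℂ → ℂ) (hs₁ : Differentiable ℂ s₁)
    (hval : ∀ w : ℂ, w ≠ 0 → s₁ (w ^ 2) = Complex.sin (Real.pi * w) / (Real.pi * w)) :
    ∃ c : ℝ, 0 < c ∧ ∀ z : ℂ,
      (∀ k : ℕ, 1 ≤ k → 3 * d₀ ≤ ‖z - (k : ℂ) ^ 2‖) →
      c * Real.exp (Real.pi * Real.sqrt ‖z‖ * |Real.sin (z.arg / 2)|) /
          (1 + ‖z‖) ≤ ‖s₁ z‖ :=
  sOne_lower_bound_general d₀ hd₀ s₁ hs₁ hval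
end
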